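/- Let d ≥ 1 and let λ_1, …, λ_{d²} be nonnegative reals. Then there exists a d²×d² complex unitary matrix U such that ∑_{l=1}^{d²} | ∑_{k=1}^{d²} (U_{lk})^d λ_k |^{2/d} = | λ_1 − ∑_{k=2}^{d²} λ_k |^{2/d}. Consequently, for a family a^{(1)}, …, a^{(d²)} of d×d complex matrices whose τ-tensor is diagonal with diagonal entries λ_1 ≥ λ_2 ≥ … ≥ 0 satisfying λ_1 > λ_2 + ⋯ + λ_{d²}, the convex-roof G-concurrence of the corresponding density matrix satisfies λ_1^{2/d} − ∑_{k≥2} λ_k^{2/d} ≤ G(ρ) ≤ (λ_1 − ∑_{k≥2} λ_k)^{2/d}, the upper bound being realized by the decomposition b^{(l)} = ∑_k U_{lk} a^{(k)} associated with this U. -/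

import Mathlib

/-!
Expanding `det (∑ₖ cₖ a⁽ᵏ⁾)` multilinearly in the rows and symmetrising over `S_d` turns it into
the contraction of the τ-tensor with `c ⊗ ⋯ ⊗ c`; when τ is diagonal this gives
`d^{d/2} det (∑ₖ cₖ a⁽ᵏ⁾) = ∑ₖ cₖᵈ λₖ`, so the G-concurrence of `b⁽ˡ⁾ = ∑ₖ Uₗₖ a⁽ᵏ⁾` is
`|∑ₖ Uₗₖᵈ λₖ|^{2/d}`.

Lower bound: by the triangle inequality and subadditivity of `t ↦ t^{2/d}` (for `d ≥ 2`; for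
`d = 1` there is a single index), row `l` contributes at least
`|Uₗ₁|² λ₁^{2/d} − ∑_{k≥2} |Uₗₖ|² λₖ^{2/d}`, and the columns of a unitary are unit vectors.

Upper bound: take `U = (F ⊗ F) · diag η`, with `F` the normalised Fourier matrix of `ℤ/d` and
`ηₖ` a `d`-th root of `+1` for `k = 1` and of `-1` otherwise. Then `Uₗₖᵈ = ±d^{-d}` with sign `+`
exactly for `k = 1`, so each of the `d²` rows contributes `d^{-2} |λ₁ − ∑_{k≥2} λₖ|^{2/d}`.
-/

open scoped BigOperators Matrix

/-- The τ-tensor of a family `a : Fin m → Matrix (Fin d) (Fin d) ℂ`: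
`τ^a_{k₁…k_d} = (d^{d/2} / d!) ∑_{σ ∈ S_d} det (M(σ))`, where the `i`-th row of `M(σ)`
is the `i`-th row of `a (k (σ i))`. -/
noncomputable def tauTensor (d m : ℕ) (a : Fin m → Matrix (Fin d) (Fin d) ℂ)
    (k : Fin d → Fin m) : ℂ :=
  (((Real.sqrt d ^ d / d.factorial : ℝ)) : ℂ) *
    ∑ σ : Equiv.Perm (Fin d), (Matrix.of fun i j => a (k (σ i)) i j).det

open Finset Matrix
open scoped Kronecker

theorem Matrix.det_sum_smul_eq_sum_prod_mul_det {R n ι : Type*} [CommRing R] [Fintype n]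
    [DecidableEq n] [Fintype ι] [DecidableEq ι] (c : ι → R) (a : ι → Matrix n n R) :
    (∑ k, c k • a k).det = ∑ r : n → ι, (∏ i, c (r i)) * (of fun i j => a (r i) i j).det := by
  calc (∑ k, c k • a k).det = detRowAlternating fun i => ∑ k, c k • (a k i : n → R) := by
        congr 1
        ext i j
        simp [Matrix.sum_apply]
    _ = ∑ r : n → ι, detRowAlternating fun i => c (r i) • (a (r i) i : n → R) :=
        MultilinearMap.map_sum _ _
    _ = _ := sum_congr rfl fun r _ => MultilinearMap.map_smul_univ _ _ _

theorem sum_prod_mul_sum_perm {R n ι : Type*} [CommRing R] [Fintype n] [DecidableEq n]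
    [Fintype ι] (c : ι → R) (f : (n → ι) → R) :
    ∑ r : n → ι, (∏ i, c (r i)) * ∑ σ : Equiv.Perm n, f (fun i => r (σ i))
      = (Fintype.card n).factorial * ∑ r : n → ι, (∏ i, c (r i)) * f r := by
  have hperm (σ : Equiv.Perm n) :
      ∑ r : n → ι, (∏ i, c (r i)) * f (fun i => r (σ i)) = ∑ r : n → ι, (∏ i, c (r i)) * f r := by
    refine Fintype.sum_equiv (σ.arrowCongr (Equiv.refl ι)).symm _ _ fun r => ?_
    congr 1
    exact (Equiv.prod_comp σ fun i => c (r i)).symm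
  simp_rw [mul_sum]
  rw [sum_comm]
  simp_rw [← mul_sum, hperm]
  rw [sum_const, card_univ, Fintype.card_perm, nsmul_eq_mul]

section TauTensor

variable {d m : ℕ} (a : Fin m → Matrix (Fin d) (Fin d) ℂ)

theorem sum_prod_mul_tauTensor (c : Fin m → ℂ) :
    ∑ r : Fin d → Fin m, (∏ i, c (r i)) * tauTensor d m a r
      = (Real.sqrt d ^ d : ℝ) * (∑ k, c k • a k).det := by
  have hfac : (d.factorial : ℂ) ≠ 0 := Nat.cast_ne_zero.mpr d.factorial_ne_zero
  simp only [tauTensor, mul_left_comm _ ((_ : ℝ) : ℂ), ← mul_sum]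
  rw [sum_prod_mul_sum_perm c fun r => (of fun i j => a (r i) i j).det, Fintype.card_fin,
    det_sum_smul_eq_sum_prod_mul_det]
  push_cast
  field_simp

variable {a} {lam : Fin m → ℝ}

theorem sum_prod_mul_tauTensor_of_diagonal [NeZero d]
    (hdiag : ∀ c, tauTensor d m a (fun _ => c) = (lam c : ℂ))
    (hoff : ∀ k : Fin d → Fin m, (∃ i j, k i ≠ k j) → tauTensor d m a k = 0) (c : Fin m → ℂ) :
    ∑ r : Fin d → Fin m, (∏ i, c (r i)) * tauTensor d m a r = ∑ k, c k ^ d * (lam k : ℂ) := by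
  rw [← sum_subset (subset_univ (univ.image fun k (_ : Fin d) => k))]
  · rw [sum_image fun x _ y _ h => congrFun h 0]
    refine sum_congr rfl fun k _ => ?_
    rw [hdiag, prod_const, card_univ, Fintype.card_fin]
  · intro r _ hr
    suffices ∃ i j, r i ≠ r j by rw [hoff r this, mul_zero]
    by_contra! hcon
    exact hr (mem_image.mpr ⟨r 0, mem_univ _, funext fun i => hcon 0 i⟩)

end TauTensor

theorem Real.pow_rpow_two_div {x : ℝ} (hx : 0 ≤ x) (d : ℕ) [NeZero d] :
    (x ^ d) ^ ((2 : ℝ) / d) = x ^ 2 := by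
  rw [← Real.rpow_natCast_mul hx, mul_div_cancel₀ _ (Nat.cast_ne_zero.mpr (NeZero.ne d))]
  exact_mod_cast Real.rpow_natCast x 2

theorem mul_norm_det_sum_smul_rpow_eq {d m : ℕ} [NeZero d] {a : Fin m → Matrix (Fin d) (Fin d) ℂ}
    {lam : Fin m → ℝ} (hdiag : ∀ c, tauTensor d m a (fun _ => c) = (lam c : ℂ))
    (hoff : ∀ k : Fin d → Fin m, (∃ i j, k i ≠ k j) → tauTensor d m a k = 0) (c : Fin m → ℂ) :
    (d : ℝ) * ‖(∑ k, c k • a k).det‖ ^ ((2 : ℝ) / d)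
      = ‖∑ k, c k ^ d * (lam k : ℂ)‖ ^ ((2 : ℝ) / d) := by
  rw [← sum_prod_mul_tauTensor_of_diagonal hdiag hoff, sum_prod_mul_tauTensor, norm_mul,
    Complex.norm_real, Real.norm_of_nonneg (by positivity),
    Real.mul_rpow (by positivity) (norm_nonneg _), Real.pow_rpow_two_div (Real.sqrt_nonneg _),
    Real.sq_sqrt (Nat.cast_nonneg _)]

theorem Real.rpow_sum_le_sum_rpow {ι : Type*} (s : Finset ι) {f : ι → ℝ}
    (hf : ∀ i ∈ s, 0 ≤ f i) {p : ℝ} (hp0 : 0 < p) (hp1 : p ≤ 1) :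
    (∑ i ∈ s, f i) ^ p ≤ ∑ i ∈ s, f i ^ p :=
  le_sum_of_subadditive_on_pred (fun x => x ^ p) (0 ≤ ·) (by simp [Real.zero_rpow hp0.ne'])
    (fun _ _ hx hy => Real.rpow_add_le_add_rpow hx hy hp0.le hp1) (fun _ _ => add_nonneg) f hf

theorem norm_rpow_le_norm_add_sum_add_sum_norm_rpow {E ι : Type*} [SeminormedAddCommGroup E]
    {p : ℝ} (hp0 : 0 < p) (hp1 : p ≤ 1) (x : E) (s : Finset ι) (y : ι → E) :
    ‖x‖ ^ p ≤ ‖x + ∑ k ∈ s, y k‖ ^ p + ∑ k ∈ s, ‖y k‖ ^ p := by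
  have htri : ‖x‖ ≤ ‖x + ∑ k ∈ s, y k‖ + ∑ k ∈ s, ‖y k‖ :=
    calc ‖x‖ ≤ ‖x + ∑ k ∈ s, y k‖ + ‖∑ k ∈ s, y k‖ := norm_le_add_norm_add x _
      _ ≤ _ := by gcongr; exact norm_sum_le _ _
  calc ‖x‖ ^ p ≤ (‖x + ∑ k ∈ s, y k‖ + ∑ k ∈ s, ‖y k‖) ^ p :=
        Real.rpow_le_rpow (norm_nonneg _) htri hp0.le
    _ ≤ ‖x + ∑ k ∈ s, y k‖ ^ p + (∑ k ∈ s, ‖y k‖) ^ p :=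
        Real.rpow_add_le_add_rpow (norm_nonneg _) (sum_nonneg fun _ _ => norm_nonneg _) hp0.le hp1
    _ ≤ _ := by
        gcongr
        exact Real.rpow_sum_le_sum_rpow s (fun _ _ => norm_nonneg _) hp0 hp1

theorem Matrix.sum_norm_apply_sq_eq_one_of_mem_unitaryGroup {n 𝕜 : Type*} [Fintype n]
    [DecidableEq n] [RCLike 𝕜] {U : Matrix n n 𝕜} (hU : U ∈ unitaryGroup n 𝕜) (k : n) :
    ∑ l, ‖U l k‖ ^ 2 = 1 := by
  have hkk := congrFun₂ (mem_unitaryGroup_iff'.mp hU) k k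
  simp only [mul_apply, one_apply_eq, star_apply, RCLike.star_def, RCLike.conj_mul] at hkk
  exact_mod_cast hkk

section LowerBound

variable {ι : Type*} [Fintype ι] [DecidableEq ι] {d : ℕ} [NeZero d] {lam : ι → ℝ}

theorem norm_sq_mul_rpow_le (hd : 2 ≤ d ∨ Subsingleton ι) (hlam : ∀ k, 0 ≤ lam k)
    (z : ι → ℂ) (i₀ : ι) :
    ‖z i₀‖ ^ 2 * lam i₀ ^ ((2 : ℝ) / d) ≤ ‖∑ k, z k ^ d * (lam k : ℂ)‖ ^ ((2 : ℝ) / d)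
      + ∑ k ∈ univ.erase i₀, ‖z k‖ ^ 2 * lam k ^ ((2 : ℝ) / d) := by
  have hterm : ∀ k, ‖z k ^ d * (lam k : ℂ)‖ ^ ((2 : ℝ) / d) = ‖z k‖ ^ 2 * lam k ^ ((2 : ℝ) / d) :=
    fun k => by
      rw [norm_mul, norm_pow, Complex.norm_real, Real.norm_of_nonneg (hlam k),
        Real.mul_rpow (by positivity) (hlam k), Real.pow_rpow_two_div (norm_nonneg _)]
  simp only [← hterm]
  rw [← add_sum_erase _ _ (mem_univ i₀)]
  rcases hd with hd | hι
  · have hp1 : (2 : ℝ) / d ≤ 1 := by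
      rw [div_le_one (by positivity)]
      exact_mod_cast hd
    exact norm_rpow_le_norm_add_sum_add_sum_norm_rpow (by positivity) hp1 _ _ _
  · have hempty : univ.erase i₀ = ∅ := by
      ext k
      simp [Subsingleton.elim k i₀]
    simp [hempty]

theorem sub_sum_rpow_le_sum_norm_rpow_of_mem_unitaryGroup (hd : 2 ≤ d ∨ Subsingleton ι)
    (hlam : ∀ k, 0 ≤ lam k) {V : Matrix ι ι ℂ} (hV : V ∈ Matrix.unitaryGroup ι ℂ) (i₀ : ι) :
    lam i₀ ^ ((2 : ℝ) / d) - ∑ k ∈ univ.erase i₀, lam k ^ ((2 : ℝ) / d)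
      ≤ ∑ l, ‖∑ k, V l k ^ d * (lam k : ℂ)‖ ^ ((2 : ℝ) / d) := by
  have hsum := sum_le_sum fun l (_ : l ∈ univ) => norm_sq_mul_rpow_le hd hlam (V l) i₀
  rw [sum_add_distrib, sum_comm (s := univ)] at hsum
  simp only [← sum_mul, Matrix.sum_norm_apply_sq_eq_one_of_mem_unitaryGroup hV, one_mul] at hsum
  linarith

end LowerBound

theorem Matrix.submatrix_mem_unitaryGroup {m n α : Type*} [Fintype m] [DecidableEq m]
    [Fintype n] [DecidableEq n] [CommRing α] [StarRing α] {A : Matrix n n α}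
    (hA : A ∈ unitaryGroup n α) (e : m ≃ n) : A.submatrix e e ∈ unitaryGroup m α := by
  rw [mem_unitaryGroup_iff'] at hA ⊢
  rw [star_eq_conjTranspose, conjTranspose_submatrix, submatrix_mul_equiv, ← star_eq_conjTranspose,
    hA, submatrix_one_equiv]

theorem Matrix.diagonal_mem_unitaryGroup {n α : Type*} [Fintype n] [DecidableEq n]
    [CommRing α] [StarRing α] {η : n → α} (hη : ∀ i, star (η i) * η i = 1) :
    diagonal η ∈ unitaryGroup n α := by
  rw [mem_unitaryGroup_iff', star_eq_conjTranspose, diagonal_conjTranspose, diagonal_mul_diagonal]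
  exact diagonal_eq_one.mpr (funext hη)

section Fourier

variable {R : Type*} [CommRing R] [Fintype R] (ψ : AddChar R ℂ)

noncomputable def fourierMatrix : Matrix R R ℂ :=
  of fun x y => ((√(Fintype.card R) : ℝ) : ℂ)⁻¹ * ψ (x * y)

variable {ψ}

theorem fourierMatrix_mem_unitaryGroup [DecidableEq R] (hψ : ψ.IsPrimitive) :
    fourierMatrix ψ ∈ unitaryGroup R ℂ := by
  rw [mem_unitaryGroup_iff']
  ext x y
  have hcard : ((√(Fintype.card R) : ℝ) : ℂ) ^ 2 = Fintype.card R := by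
    rw [← Complex.ofReal_pow, Real.sq_sqrt (Nat.cast_nonneg _), Complex.ofReal_natCast]
  have hterm : ∀ z, star (fourierMatrix ψ z x) * fourierMatrix ψ z y
      = (((√(Fintype.card R) : ℝ) : ℂ) ^ 2)⁻¹ * ψ (z * (y - x)) := by
    intro z
    simp only [fourierMatrix, of_apply, star_mul', star_inv₀, Complex.star_def,
      Complex.conj_ofReal, ← AddChar.map_neg_eq_conj]
    rw [mul_sub, sub_eq_neg_add, AddChar.map_add_eq_mul, mul_comm z x]
    ring
  rw [mul_apply]
  simp only [star_apply, hterm, ← mul_sum, AddChar.sum_mulShift _ hψ, sub_eq_zero, hcard,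
    one_apply, eq_comm (a := y)]
  split_ifs <;> simp

theorem fourierMatrix_apply_pow {n : ℕ} (hn : (n : R) = 0) (x y : R) :
    fourierMatrix ψ x y ^ n = ((√(Fintype.card R) : ℝ) : ℂ)⁻¹ ^ n := by
  rw [fourierMatrix, of_apply, mul_pow, ← AddChar.map_nsmul_eq_pow, nsmul_eq_mul, hn, zero_mul,
    AddChar.map_zero_eq_one, mul_one]

end Fourier

theorem exists_mem_unitaryGroup_pow_apply_eq {ι : Type*} [Fintype ι] [DecidableEq ι] (d : ℕ)
    [NeZero d] (hι : Fintype.card ι = d ^ 2) (s : ι → ℂ) (hs : ∀ k, ‖s k‖ = 1) :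
    ∃ U ∈ unitaryGroup ι ℂ, ∀ l k, U l k ^ d = s k / (d : ℂ) ^ d := by
  have hcard : Fintype.card ι = Fintype.card (ZMod d × ZMod d) := by
    simp [ZMod.card, hι, sq]
  let e := Fintype.equivOfCardEq hcard
  let F := fourierMatrix (ZMod.stdAddChar (N := d))
  have hF : F ∈ unitaryGroup (ZMod d) ℂ :=
    fourierMatrix_mem_unitaryGroup (ZMod.isPrimitive_stdAddChar d)
  choose η hη using fun k => IsAlgClosed.exists_pow_nat_eq (s k) (NeZero.pos d)
  have hη_norm : ∀ k, ‖η k‖ = 1 := fun k =>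
    (pow_eq_one_iff_of_nonneg (norm_nonneg _) (NeZero.ne d)).mp (by rw [← norm_pow, hη, hs])
  refine ⟨(F ⊗ₖ F).submatrix e e * diagonal η,
    mul_mem (submatrix_mem_unitaryGroup (kronecker_mem_unitary hF hF) e)
      (diagonal_mem_unitaryGroup fun k => ?_), fun l k => ?_⟩
  · rw [Complex.star_def, Complex.conj_mul', hη_norm, Complex.ofReal_one, one_pow]
  · rw [mul_diagonal, submatrix_apply, kronecker_apply, mul_pow, mul_pow,
      fourierMatrix_apply_pow (ZMod.natCast_self d), fourierMatrix_apply_pow (ZMod.natCast_self d),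
      hη, ← mul_pow, ← mul_inv, ← Complex.ofReal_mul, Real.mul_self_sqrt (Nat.cast_nonneg _),
      ZMod.card, Complex.ofReal_natCast, inv_pow, div_eq_mul_inv, mul_comm]

theorem sum_norm_sum_pow_mul_rpow_eq {ι : Type*} [Fintype ι] {d : ℕ} [NeZero d]
    (hι : Fintype.card ι = d ^ 2) {U : Matrix ι ι ℂ} {s : ι → ℂ}
    (hU : ∀ l k, U l k ^ d = s k / (d : ℂ) ^ d) (μ : ι → ℂ) :
    ∑ l, ‖∑ k, U l k ^ d * μ k‖ ^ ((2 : ℝ) / d) = ‖∑ k, s k * μ k‖ ^ ((2 : ℝ) / d) := by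
  have hrow : ∀ l, ‖∑ k, U l k ^ d * μ k‖ = (d : ℝ)⁻¹ ^ d * ‖∑ k, s k * μ k‖ := fun l => by
    simp only [hU, div_eq_inv_mul, mul_assoc, ← mul_sum]
    rw [norm_mul, norm_inv, norm_pow, Complex.norm_natCast, inv_pow]
  have hd : (d : ℝ) ≠ 0 := Nat.cast_ne_zero.mpr (NeZero.ne d)
  simp only [hrow, Real.mul_rpow (by positivity : (0 : ℝ) ≤ (d : ℝ)⁻¹ ^ d) (norm_nonneg _),
    Real.pow_rpow_two_div (by positivity : (0 : ℝ) ≤ (d : ℝ)⁻¹), sum_const, card_univ, hι,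
    nsmul_eq_mul]
  field_simp
  push_cast
  ring

theorem sum_ite_one_neg_one_mul {ι R : Type*} [Fintype ι] [DecidableEq ι] [CommRing R]
    (μ : ι → R) (i₀ : ι) :
    ∑ k, (if k = i₀ then 1 else -1) * μ k = μ i₀ - ∑ k ∈ univ.erase i₀, μ k := by
  rw [← add_sum_erase _ _ (mem_univ i₀), if_pos rfl, one_mul, sub_eq_add_neg, ← sum_neg_distrib]
  congr 1
  exact sum_congr rfl fun k hk => by rw [if_neg (ne_of_mem_erase hk), neg_one_mul]

theorem gConcurrence_bounds_general
    (d : ℕ) (hd : 1 ≤ d)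
    (a : Fin (d ^ 2) → Matrix (Fin d) (Fin d) ℂ) (lam : Fin (d ^ 2) → ℝ)
    (hlam : ∀ k, 0 ≤ lam k)
    (hdiag : ∀ c, tauTensor d (d ^ 2) a (fun _ => c) = (lam c : ℂ))
    (hoff : ∀ k : Fin d → Fin (d ^ 2), (∃ i j, k i ≠ k j) → tauTensor d (d ^ 2) a k = 0)
    (hgt : ∑ k ∈ Finset.univ.erase (⟨0, pow_pos hd 2⟩ : Fin (d ^ 2)), lam k
            < lam ⟨0, pow_pos hd 2⟩) :
    (∀ mu : Fin (d ^ 2) → ℝ, (∀ k, 0 ≤ mu k) →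
      ∃ U : Matrix (Fin (d ^ 2)) (Fin (d ^ 2)) ℂ,
        U ∈ Matrix.unitaryGroup (Fin (d ^ 2)) ℂ ∧
        ∑ l, ‖∑ k, (U l k) ^ d * (mu k : ℂ)‖ ^ ((2 : ℝ) / d)
          = |mu ⟨0, pow_pos hd 2⟩
                - ∑ k ∈ Finset.univ.erase (⟨0, pow_pos hd 2⟩ : Fin (d ^ 2)), mu k|
              ^ ((2 : ℝ) / d)) ∧
    (∀ V ∈ Matrix.unitaryGroup (Fin (d ^ 2)) ℂ,
      lam ⟨0, pow_pos hd 2⟩ ^ ((2 : ℝ) / d)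
          - ∑ k ∈ Finset.univ.erase (⟨0, pow_pos hd 2⟩ : Fin (d ^ 2)),
              lam k ^ ((2 : ℝ) / d)
        ≤ ∑ l, (d : ℝ) * ‖(∑ k, V l k • a k).det‖ ^ ((2 : ℝ) / d)) ∧
    (∃ U ∈ Matrix.unitaryGroup (Fin (d ^ 2)) ℂ,
      ∑ l, (d : ℝ) * ‖(∑ k, U l k • a k).det‖ ^ ((2 : ℝ) / d)
        = (lam ⟨0, pow_pos hd 2⟩
            - ∑ k ∈ Finset.univ.erase (⟨0, pow_pos hd 2⟩ : Fin (d ^ 2)), lam k)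
          ^ ((2 : ℝ) / d)) := by
  have : NeZero d := ⟨by omega⟩
  set i₀ : Fin (d ^ 2) := ⟨0, pow_pos hd 2⟩
  have hG := mul_norm_det_sum_smul_rpow_eq hdiag hoff
  obtain ⟨U, hU, hU_pow⟩ := exists_mem_unitaryGroup_pow_apply_eq d (Fintype.card_fin _)
    (fun k => if k = i₀ then 1 else -1) (fun k => by split_ifs <;> simp)
  have hU_sum (mu : Fin (d ^ 2) → ℝ) : ∑ l, ‖∑ k, U l k ^ d * (mu k : ℂ)‖ ^ ((2 : ℝ) / d)
      = |mu i₀ - ∑ k ∈ univ.erase i₀, mu k| ^ ((2 : ℝ) / d) := by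
    rw [sum_norm_sum_pow_mul_rpow_eq (Fintype.card_fin _) hU_pow, sum_ite_one_neg_one_mul,
      ← Complex.ofReal_sum, ← Complex.ofReal_sub, Complex.norm_real, Real.norm_eq_abs]
  refine ⟨fun mu _ => ⟨U, hU, hU_sum mu⟩, fun V hV => ?_, ⟨U, hU, ?_⟩⟩
  · have hd₂ : 2 ≤ d ∨ Subsingleton (Fin (d ^ 2)) := by
      rcases hd.eq_or_lt with rfl | hd
      · exact Or.inr (Fintype.card_le_one_iff_subsingleton.mp (by simp))
      · exact Or.inl hd
    simpa only [hG] using sub_sum_rpow_le_sum_norm_rpow_of_mem_unitaryGroup hd₂ hlam hV i₀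
  · simp only [hG, hU_sum, abs_of_pos (sub_pos.mpr hgt)]

/-- **Theorem 7 (generalized Wootters formula).** (1) For any nonnegative reals
`μ₁, …, μ_{d²}` there is a `d² × d²` unitary `U` with
`∑_l |∑_k (U_{lk})^d μ_k|^{2/d} = |μ₁ − ∑_{k≥2} μ_k|^{2/d}`.
(2) Consequently, if the τ-tensor of `a⁽¹⁾, …, a⁽ᵈ²⁾` is diagonal with nonnegative entries
`λ₁ ≥ λ₂ ≥ … ` satisfying `λ₁ > ∑_{k≥2} λ_k`, then every decomposition
`b⁽ˡ⁾ = ∑_k V_{lk} a⁽ᵏ⁾` has total G-concurrence at least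
`λ₁^{2/d} − ∑_{k≥2} λ_k^{2/d}`, and some unitary `U` realizes the upper bound
`(λ₁ − ∑_{k≥2} λ_k)^{2/d}` exactly; these bound the convex-roof G-concurrence. -/
theorem gConcurrence_bounds
    (d : ℕ) (hd : 1 ≤ d)
    (a : Fin (d ^ 2) → Matrix (Fin d) (Fin d) ℂ) (lam : Fin (d ^ 2) → ℝ)
    (hlam : ∀ k, 0 ≤ lam k) (hsorted : Antitone lam)
    (hdiag : ∀ c, tauTensor d (d ^ 2) a (fun _ => c) = (lam c : ℂ))
    (hoff : ∀ k : Fin d → Fin (d ^ 2), (∃ i j, k i ≠ k j) → tauTensor d (d ^ 2) a k = 0)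
    (hgt : ∑ k ∈ Finset.univ.erase (⟨0, pow_pos hd 2⟩ : Fin (d ^ 2)), lam k
            < lam ⟨0, pow_pos hd 2⟩) :
    (∀ mu : Fin (d ^ 2) → ℝ, (∀ k, 0 ≤ mu k) →
      ∃ U : Matrix (Fin (d ^ 2)) (Fin (d ^ 2)) ℂ,
        U ∈ Matrix.unitaryGroup (Fin (d ^ 2)) ℂ ∧
        ∑ l, ‖∑ k, (U l k) ^ d * (mu k : ℂ)‖ ^ ((2 : ℝ) / d)
          = |mu ⟨0, pow_pos hd 2⟩
                - ∑ k ∈ Finset.univ.erase (⟨0, pow_pos hd 2⟩ : Fin (d ^ 2)), mu k|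
              ^ ((2 : ℝ) / d)) ∧
    (∀ V ∈ Matrix.unitaryGroup (Fin (d ^ 2)) ℂ,
      lam ⟨0, pow_pos hd 2⟩ ^ ((2 : ℝ) / d)
          - ∑ k ∈ Finset.univ.erase (⟨0, pow_pos hd 2⟩ : Fin (d ^ 2)),
              lam k ^ ((2 : ℝ) / d)
        ≤ ∑ l, (d : ℝ) * ‖(∑ k, V l k • a k).det‖ ^ ((2 : ℝ) / d)) ∧
    (∃ U ∈ Matrix.unitaryGroup (Fin (d ^ 2)) ℂ,
      ∑ l, (d : ℝ) * ‖(∑ k, U l k • a k).det‖ ^ ((2 : ℝ) / d)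
        = (lam ⟨0, pow_pos hd 2⟩
            - ∑ k ∈ Finset.univ.erase (⟨0, pow_pos hd 2⟩ : Fin (d ^ 2)), lam k)
          ^ ((2 : ℝ) / d)) :=
  gConcurrence_bounds_general d hd a lam hlam hdiag hoff hgt
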